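/- Let z = x + iy be a complex number with x ≥ 5/4 and |y| ≤ x − 1, and let k ≥ 1 be a natural number. Then |1 + z + z² + ⋯ + z^k|² ≥ |z|^{2(k−1)} · (|z|² + 2x + 1), with equality if and only if k = 1. -/

import Mathlib

/-!
Write `S_k = 1 + z + ⋯ + z^k`. For `k = 2` one has `S_2 = 1 + z(1 + z)`, so
`|S_2|² = |z|²|1 + z|² + 1 + 2 Re(z + z²)`, and `Re(z + z²) = x + x² − y² > 0`.
For `k ≥ 3` multiply through by `|z − 1|²`: the claim becomes
`|z|^{2(k−1)} |z² − 1|² < |z^{k+1} − 1|²`. Here `|y| ≤ x − 1` gives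
`Re z² = x² − y² ≥ 2x − 1 ≥ 3/2`, so `|z² − 1|² ≤ |z|⁴ − 2`, while `|z^{k+1} − 1| ≥ |z|^{k+1} − 1`
and `|z|^{k+1} ≤ |z|^{2(k−1)}`.
-/

open Complex Finset

namespace Complex

variable {z : ℂ}

lemma sq_norm_one_add (z : ℂ) : ‖1 + z‖ ^ 2 = ‖z‖ ^ 2 + 2 * z.re + 1 := by
  rw [Complex.sq_norm, Complex.sq_norm, normSq_add]
  simp only [map_one, one_mul, conj_re]
  ring

lemma sq_norm_sub_one (z : ℂ) : ‖z - 1‖ ^ 2 = ‖z‖ ^ 2 - 2 * z.re + 1 := by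
  rw [norm_sub_rev, sub_eq_add_neg, sq_norm_one_add, norm_neg, neg_re]
  ring

lemma two_mul_re_sub_one_le_re_sq (hy : |z.im| ≤ z.re - 1) : 2 * z.re - 1 ≤ (z ^ 2).re := by
  have hy2 : z.im ^ 2 ≤ (z.re - 1) ^ 2 := sq_le_sq' (abs_le.mp hy).1 (abs_le.mp hy).2
  rw [sq, mul_re, ← sq, ← sq]
  nlinarith

lemma sq_norm_mul_sq_norm_one_add_lt_sq_norm_one_add_add_sq (h : -(1 / 2) < (z + z ^ 2).re) :
    ‖z‖ ^ 2 * ‖1 + z‖ ^ 2 < ‖1 + z + z ^ 2‖ ^ 2 := by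
  have hw : 1 + z + z ^ 2 = 1 + z * (1 + z) := by ring
  have hw_re : (z * (1 + z)).re = (z + z ^ 2).re := by ring_nf
  rw [hw, sq_norm_one_add (z * (1 + z)), norm_mul, mul_pow, hw_re]
  linarith

lemma pow_mul_sq_norm_one_add_lt_sq_norm_geom_sum (hz : 3 / 2 ≤ (z ^ 2).re) {k : ℕ}
    (hk : 3 ≤ k) :
    ‖z‖ ^ (2 * (k - 1)) * ‖1 + z‖ ^ 2 < ‖∑ j ∈ range (k + 1), z ^ j‖ ^ 2 := by
  set r := ‖z‖
  have hr : 1 ≤ r := by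
    have : (z ^ 2).re ≤ r ^ 2 := norm_pow z 2 ▸ re_le_norm (z ^ 2)
    nlinarith [norm_nonneg z]
  have hz1 : 0 < ‖z - 1‖ := norm_pos_iff.mpr fun h ↦ by
    norm_num [sub_eq_zero.mp h] at hz
  have h_geom : ‖∑ j ∈ range (k + 1), z ^ j‖ * ‖z - 1‖ = ‖z ^ (k + 1) - 1‖ := by
    rw [← norm_mul, geom_sum_mul]
  have h_sq : ‖1 + z‖ * ‖z - 1‖ = ‖z ^ 2 - 1‖ := by
    rw [← norm_mul]; ring_nf
  have h_sq_le : ‖z ^ 2 - 1‖ ^ 2 ≤ r ^ 4 - 2 := by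
    rw [sq_norm_sub_one, norm_pow]; linarith
  have h_pow_le : r ^ (k + 1) ≤ r ^ (2 * (k - 1)) := pow_le_pow_right₀ hr (by omega)
  have h_pow_sq : (r ^ (k + 1)) ^ 2 = r ^ (2 * (k - 1)) * r ^ 4 := by
    rw [← pow_mul, ← pow_add]; congr 1; omega
  have h_reverse : r ^ (k + 1) - 1 ≤ ‖z ^ (k + 1) - 1‖ := by
    simpa [norm_pow] using norm_sub_norm_le (z ^ (k + 1)) 1
  suffices r ^ (2 * (k - 1)) * ‖z ^ 2 - 1‖ ^ 2 < ‖z ^ (k + 1) - 1‖ ^ 2 by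
    rw [← h_geom, ← h_sq, mul_pow, mul_pow, ← mul_assoc] at this
    exact lt_of_mul_lt_mul_right this (by positivity)
  calc r ^ (2 * (k - 1)) * ‖z ^ 2 - 1‖ ^ 2
      ≤ r ^ (2 * (k - 1)) * (r ^ 4 - 2) := by gcongr
    _ < (r ^ (k + 1) - 1) ^ 2 := by nlinarith
    _ ≤ ‖z ^ (k + 1) - 1‖ ^ 2 := by gcongr; exact sub_nonneg.mpr (one_le_pow₀ hr)

end Complex

/-- If `z = x + iy` with `x ≥ 5/4`, `|y| ≤ x − 1`, and `k ≥ 1`, then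
`|1 + z + ⋯ + z^k|² ≥ |z|^{2(k-1)} · (|z|² + 2x + 1)`, with equality iff `k = 1`. -/
theorem norm_geom_sum_ge (z : ℂ) (hx : (5 : ℝ) / 4 ≤ z.re) (hy : |z.im| ≤ z.re - 1)
    (k : ℕ) (hk : 1 ≤ k) :
    ‖∑ j ∈ Finset.range (k + 1), z ^ j‖ ^ 2 ≥
      ‖z‖ ^ (2 * (k - 1)) * (‖z‖ ^ 2 + 2 * z.re + 1) ∧
    (‖∑ j ∈ Finset.range (k + 1), z ^ j‖ ^ 2 =
      ‖z‖ ^ (2 * (k - 1)) * (‖z‖ ^ 2 + 2 * z.re + 1) ↔ k = 1) := by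
  have hz : 3 / 2 ≤ (z ^ 2).re := by linarith [two_mul_re_sub_one_le_re_sq hy]
  rw [← sq_norm_one_add]
  obtain rfl | hk2 := hk.eq_or_lt
  · simp [sum_range_succ, add_comm]
  suffices h : ‖z‖ ^ (2 * (k - 1)) * ‖1 + z‖ ^ 2 < ‖∑ j ∈ range (k + 1), z ^ j‖ ^ 2 from
    ⟨h.le, fun h_eq ↦ (h.ne' h_eq).elim, by omega⟩
  obtain rfl | hk3 : k = 2 ∨ 3 ≤ k := by omega
  · have h_re : -(1 / 2) < (z + z ^ 2).re := by rw [add_re]; linarith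
    simpa [sum_range_succ] using sq_norm_mul_sq_norm_one_add_lt_sq_norm_one_add_add_sq h_re
  · exact pow_mul_sq_norm_one_add_lt_sq_norm_geom_sum hz hk3
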